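/- For every integer k > 10, the sum over j from 0 to log*(k) - 1 of (log^{(j)} k)^{-1/2} is bounded above by a constant independent of k; in fact sup_{k>10} Σ_{j=0}^{log*k - 1} (log^{(j)} k)^{-1/2} < ∞. -/

import Mathlib

/-! Since `log^{(j)} k = exp (log^{(j+1)} k)` and `exp x ≥ 5 x` for `x ≥ 10`, each term of the sum
is at most `5^{-1/2}` times the next one as long as the iterated logarithms stay above `10`, which
they do before index `log* k`. The sum is therefore dominated by a geometric series whose largest
term is at most `1`. -/

/-- `iterlog k j = log^{(j)} k`, the `j`-fold iterated logarithm of `k`. -/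
noncomputable def iterlog (k : ℝ) : ℕ → ℝ
  | 0 => k
  | j + 1 => Real.log (iterlog k j)

/-- `logstar k = log* k = min {j > 0 : log^{(j)} k ≤ 10}`. -/
noncomputable def logstar (k : ℝ) : ℕ := sInf {j : ℕ | 0 < j ∧ iterlog k j ≤ 10}

open Real Finset

lemma sum_range_succ_le_div_one_sub_of_le_mul {a : ℕ → ℝ} {r : ℝ} (hr₀ : 0 ≤ r) (hr₁ : r < 1)
    (ha₀ : 0 ≤ a 0) {n : ℕ} (h : ∀ j < n, a j ≤ r * a (j + 1)) :
    ∑ j ∈ range (n + 1), a j ≤ a n / (1 - r) := by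
  have hr : 0 < 1 - r := sub_pos.mpr hr₁
  induction n with
  | zero =>
    rw [sum_range_one, le_div_iff₀ hr]
    nlinarith
  | succ n ih =>
    calc ∑ j ∈ range (n + 2), a j = ∑ j ∈ range (n + 1), a j + a (n + 1) := sum_range_succ _ _
      _ ≤ a n / (1 - r) + a (n + 1) := by gcongr; exact ih fun j hj ↦ h j (hj.trans n.lt_succ_self)
      _ ≤ r * a (n + 1) / (1 - r) + a (n + 1) := by gcongr; exact h n n.lt_succ_self
      _ = a (n + 1) / (1 - r) := by field_simp; ring

lemma five_mul_le_exp {x : ℝ} (hx : 10 ≤ x) : 5 * x ≤ exp x := by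
  have := pow_div_factorial_le_exp x (by linarith) 2
  norm_num [Nat.factorial] at this
  nlinarith

lemma exp_rpow_le_five_rpow_mul {x p : ℝ} (hx : 10 ≤ x) (hp : p ≤ 0) :
    exp x ^ p ≤ 5 ^ p * x ^ p := by
  rw [← mul_rpow (by norm_num) (by linarith)]
  exact rpow_le_rpow_of_nonpos (by linarith) (five_mul_le_exp hx) hp

lemma exp_iterlog_succ {k : ℝ} {j : ℕ} (h : 0 < iterlog k j) :
    exp (iterlog k (j + 1)) = iterlog k j :=
  exp_log h

lemma ten_lt_iterlog_of_lt_logstar {k : ℝ} (hk : 10 < k) {j : ℕ} (hj : j < logstar k) :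
    10 < iterlog k j := by
  rcases j.eq_zero_or_pos with rfl | hj₀
  · exact hk
  · have := Nat.notMem_of_lt_sInf hj
    simp only [Set.mem_ofPred_eq, not_and, not_le] at this
    exact this hj₀

lemma sum_iterlog_rpow_le {k p : ℝ} (hk : 10 < k) (hp : p < 0) :
    ∑ j ∈ range (logstar k), iterlog k j ^ p ≤ (1 - 5 ^ p)⁻¹ := by
  have hr₁ : (5 : ℝ) ^ p < 1 := rpow_lt_one_of_one_lt_of_neg (by norm_num) hp
  cases hL : logstar k with
  | zero => simpa using hr₁.le
  | succ n =>
    have hbig : ∀ j ≤ n, 10 < iterlog k j := fun j hj ↦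
      ten_lt_iterlog_of_lt_logstar hk (by omega)
    have hratio : ∀ j < n, iterlog k j ^ p ≤ 5 ^ p * iterlog k (j + 1) ^ p := fun j hj ↦ by
      rw [← exp_iterlog_succ (by linarith [hbig j hj.le])]
      exact exp_rpow_le_five_rpow_mul (hbig (j + 1) hj).le hp.le
    have hlast : iterlog k n ^ p ≤ 1 :=
      rpow_le_one_of_one_le_of_nonpos (by linarith [hbig n le_rfl]) hp.le
    calc ∑ j ∈ range (n + 1), iterlog k j ^ p
        ≤ iterlog k n ^ p / (1 - 5 ^ p) :=
          sum_range_succ_le_div_one_sub_of_le_mul (by positivity)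
            hr₁ (rpow_nonneg (by linarith [hbig 0 n.zero_le]) p) hratio
      _ ≤ (1 - 5 ^ p)⁻¹ := by
          rw [div_eq_mul_inv]
          exact mul_le_of_le_one_left (inv_nonneg.mpr (sub_pos.mpr hr₁).le) hlast

/-- `sup_{k > 10} ∑_{j=0}^{log* k - 1} (log^{(j)} k)^{-1/2} < ∞`. -/
theorem sum_iterlog_inv_sqrt_bounded :
    ∃ C : ℝ, ∀ k : ℕ, 10 < k →
      ∑ j ∈ Finset.range (logstar k), (iterlog k j) ^ (-(1 / 2) : ℝ) ≤ C :=
  ⟨_, fun _ hk ↦ sum_iterlog_rpow_le (by exact_mod_cast hk) (by norm_num)⟩
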